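/- arXiv:1412.2383 — 2 statements merged into one kernel-verified Lean document; each statement's English description precedes it below -/
import Mathlib

section
/- Let ω = exp(iπ/3) and J = diag(1, ω, ω⁵, 0, 0, −ω⁵, −ω, −1), and let ad_J(X) = J X − X J. Then for every 8×8 complex matrix X with S X + Xᵀ S = 0, one has ad_J¹³(X) + 26 ad_J⁷(X) − 27 ad_J(X) = 0; i.e., on so(8,S) the operator ad_J satisfies the polynomial identity ad_J(ad_J¹² + 26 ad_J⁶ − 27) = 0. -/
open Matrix

/-- `ω = exp(2πi/6) = exp(iπ/3)`, the primitive 6th root of unity. -/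
noncomputable def ω6 : ℂ := Complex.exp (Real.pi * Complex.I / 3)

/-- The Cartan element `J = diag(1, ω, ω⁵, 0, 0, −ω⁵, −ω, −1)`. -/
noncomputable def J8 : Matrix (Fin 8) (Fin 8) ℂ :=
  Matrix.diagonal ![1, ω6, ω6 ^ 5, 0, 0, -ω6 ^ 5, -ω6, -1]

/-- The matrix `S` defining the realization `so(8,S)` of `D₄`. -/
def S8 : Matrix (Fin 8) (Fin 8) ℂ :=
  !![0,  0, 0,  0,  0, 0,  0, 1;
     0,  0, 0,  0,  0, 0, -1, 0;
     0,  0, 0,  0,  0, 1,  0, 0;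
     0,  0, 0,  0, -1, 0,  0, 0;
     0,  0, 0, -1,  0, 0,  0, 0;
     0,  0, 1,  0,  0, 0,  0, 0;
     0, -1, 0,  0,  0, 0,  0, 0;
     1,  0, 0,  0,  0, 0,  0, 0]

/-- The commutator map `ad_J : X ↦ J X − X J`. -/
noncomputable def adJ (X : Matrix (Fin 8) (Fin 8) ℂ) : Matrix (Fin 8) (Fin 8) ℂ :=
  J8 * X - X * J8

lemma omega_val : ω6 = 1/2 + ((Real.sqrt 3 : ℝ) : ℂ)/2 * Complex.I := by
  rw [ω6]
  have h : (Real.pi : ℂ) * Complex.I / 3 = ((Real.pi/3 : ℝ) : ℂ) * Complex.I := by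
    push_cast; ring
  rw [h, Complex.exp_mul_I]
  rw [← Complex.ofReal_cos, ← Complex.ofReal_sin, Real.cos_pi_div_three, Real.sin_pi_div_three]
  push_cast; ring

lemma hw0 : ω6 ^ 2 - ω6 + 1 = 0 := by
  have hs : ((Real.sqrt 3 : ℝ) : ℂ)^2 = 3 := by
    norm_cast
    rw [Real.sq_sqrt]; norm_num
  rw [omega_val]
  linear_combination (Complex.I^2/4) * hs + (3/4:ℂ) * Complex.I_sq

noncomputable def dd : Fin 8 → ℂ := ![1, ω6, 1 - ω6, 0, 0, ω6 - 1, -ω6, -1]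

lemma vc0 {α : Type*} (a b c d e f g h : α) : ![a,b,c,d,e,f,g,h] 0 = a := rfl
lemma vc1 {α : Type*} (a b c d e f g h : α) : ![a,b,c,d,e,f,g,h] 1 = b := rfl
lemma vc2 {α : Type*} (a b c d e f g h : α) : ![a,b,c,d,e,f,g,h] 2 = c := rfl
lemma vc3 {α : Type*} (a b c d e f g h : α) : ![a,b,c,d,e,f,g,h] 3 = d := rfl
lemma vc4 {α : Type*} (a b c d e f g h : α) : ![a,b,c,d,e,f,g,h] 4 = e := rfl
lemma vc5 {α : Type*} (a b c d e f g h : α) : ![a,b,c,d,e,f,g,h] 5 = f := rfl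
lemma vc6 {α : Type*} (a b c d e f g h : α) : ![a,b,c,d,e,f,g,h] 6 = g := rfl
lemma vc7 {α : Type*} (a b c d e f g h : α) : ![a,b,c,d,e,f,g,h] 7 = h := rfl

lemma hJdiag : J8 = Matrix.diagonal dd := by
  have h5 : ω6 ^ 5 = 1 - ω6 := by
    linear_combination (ω6 ^ 3 + ω6 ^ 2 - 1) * hw0
  rw [J8, dd]
  funext i
  fin_cases i <;> simp [h5]

set_option maxHeartbeats 4000000 in
/-- On `so(8,S)` the operator `ad_J` satisfies the polynomial identity
`ad_J(ad_J¹² + 26 ad_J⁶ − 27) = 0`, i.e. `ad_J¹³ X + 26 ad_J⁷ X − 27 ad_J X = 0` for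
every `X` with `S X + Xᵀ S = 0`. -/
theorem statement_7 (X : Matrix (Fin 8) (Fin 8) ℂ) (hX : S8 * X + Xᵀ * S8 = 0) :
    adJ^[13] X + (26 : ℂ) • adJ^[7] X - (27 : ℂ) • adJ X = 0 := by
  have key : ∀ n (i j : Fin 8), adJ^[n] X i j = (dd i - dd j) ^ n * X i j := by
    intro n
    induction n with
    | zero => intro i j; simp
    | succ n ih =>
      intro i j
      rw [Function.iterate_succ_apply', adJ, hJdiag]
      simp only [Matrix.sub_apply, Matrix.diagonal_mul, Matrix.mul_diagonal, ih]
      ring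
  have hz07 : X 0 7 = 0 := by
    have h := Matrix.ext_iff.2 hX 7 7
    simp only [S8, Matrix.add_apply, Matrix.mul_apply, Matrix.transpose_apply, Matrix.zero_apply,
      Fin.sum_univ_eight, Matrix.of_apply, vc0, vc1, vc2, vc3, vc4, vc5, vc6, vc7] at h
    linear_combination h / 2
  have hz16 : X 1 6 = 0 := by
    have h := Matrix.ext_iff.2 hX 6 6
    simp only [S8, Matrix.add_apply, Matrix.mul_apply, Matrix.transpose_apply, Matrix.zero_apply,
      Fin.sum_univ_eight, Matrix.of_apply, vc0, vc1, vc2, vc3, vc4, vc5, vc6, vc7] at h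
    linear_combination -h / 2
  have hz25 : X 2 5 = 0 := by
    have h := Matrix.ext_iff.2 hX 5 5
    simp only [S8, Matrix.add_apply, Matrix.mul_apply, Matrix.transpose_apply, Matrix.zero_apply,
      Fin.sum_univ_eight, Matrix.of_apply, vc0, vc1, vc2, vc3, vc4, vc5, vc6, vc7] at h
    linear_combination h / 2
  have hz52 : X 5 2 = 0 := by
    have h := Matrix.ext_iff.2 hX 2 2
    simp only [S8, Matrix.add_apply, Matrix.mul_apply, Matrix.transpose_apply, Matrix.zero_apply,
      Fin.sum_univ_eight, Matrix.of_apply, vc0, vc1, vc2, vc3, vc4, vc5, vc6, vc7] at h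
    linear_combination h / 2
  have hz61 : X 6 1 = 0 := by
    have h := Matrix.ext_iff.2 hX 1 1
    simp only [S8, Matrix.add_apply, Matrix.mul_apply, Matrix.transpose_apply, Matrix.zero_apply,
      Fin.sum_univ_eight, Matrix.of_apply, vc0, vc1, vc2, vc3, vc4, vc5, vc6, vc7] at h
    linear_combination -h / 2
  have hz70 : X 7 0 = 0 := by
    have h := Matrix.ext_iff.2 hX 0 0
    simp only [S8, Matrix.add_apply, Matrix.mul_apply, Matrix.transpose_apply, Matrix.zero_apply,
      Fin.sum_univ_eight, Matrix.of_apply, vc0, vc1, vc2, vc3, vc4, vc5, vc6, vc7] at h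
    linear_combination h / 2
  have main : ∀ i j : Fin 8,
      ((dd i - dd j) ^ 13 + 26 * (dd i - dd j) ^ 7 - 27 * (dd i - dd j)) * X i j = 0 := by
    intro i j
    fin_cases i <;> fin_cases j
    · show ((((1:ℂ)) - ((1:ℂ))) ^ 13 + 26 * (((1:ℂ)) - ((1:ℂ))) ^ 7 - 27 * (((1:ℂ)) - ((1:ℂ)))) * X 0 0 = 0
      linear_combination (((0 : ℂ)) * X 0 0) * hw0
    · show ((((1:ℂ)) - (ω6)) ^ 13 + 26 * (((1:ℂ)) - (ω6)) ^ 7 - 27 * (((1:ℂ)) - (ω6))) * X 0 1 = 0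
      linear_combination (((-1 : ℂ) * ω6 ^ 11 + (12 : ℂ) * ω6 ^ 10 + (-65 : ℂ) * ω6 ^ 9 + (209 : ℂ) * ω6 ^ 8 + (-441 : ℂ) * ω6 ^ 7 + (637 : ℂ) * ω6 ^ 6 + (-664 : ℂ) * ω6 ^ 5 + (597 : ℂ) * ω6 ^ 4 + (-572 : ℂ) * ω6 ^ 3 + (456 : ℂ) * ω6 ^ 2 + (-168 : ℂ) * ω6) * X 0 1) * hw0
    · show ((((1:ℂ)) - ((1:ℂ) - ω6)) ^ 13 + 26 * (((1:ℂ)) - ((1:ℂ) - ω6)) ^ 7 - 27 * (((1:ℂ)) - ((1:ℂ) - ω6))) * X 0 2 = 0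
      linear_combination (((1 : ℂ) * ω6 ^ 11 + (1 : ℂ) * ω6 ^ 10 + (-1 : ℂ) * ω6 ^ 8 + (-1 : ℂ) * ω6 ^ 7 + (27 : ℂ) * ω6 ^ 5 + (27 : ℂ) * ω6 ^ 4 + (-27 : ℂ) * ω6 ^ 2 + (-27 : ℂ) * ω6) * X 0 2) * hw0
    · show ((((1:ℂ)) - ((0:ℂ))) ^ 13 + 26 * (((1:ℂ)) - ((0:ℂ))) ^ 7 - 27 * (((1:ℂ)) - ((0:ℂ)))) * X 0 3 = 0
      linear_combination (((0 : ℂ)) * X 0 3) * hw0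
    · show ((((1:ℂ)) - ((0:ℂ))) ^ 13 + 26 * (((1:ℂ)) - ((0:ℂ))) ^ 7 - 27 * (((1:ℂ)) - ((0:ℂ)))) * X 0 4 = 0
      linear_combination (((0 : ℂ)) * X 0 4) * hw0
    · show ((((1:ℂ)) - (ω6 - (1:ℂ))) ^ 13 + 26 * (((1:ℂ)) - (ω6 - (1:ℂ))) ^ 7 - 27 * (((1:ℂ)) - (ω6 - (1:ℂ)))) * X 0 5 = 0
      linear_combination (((-1 : ℂ) * ω6 ^ 11 + (25 : ℂ) * ω6 ^ 10 + (-286 : ℂ) * ω6 ^ 9 + (1977 : ℂ) * ω6 ^ 8 + (-9177 : ℂ) * ω6 ^ 7 + (30030 : ℂ) * ω6 ^ 6 + (-70643 : ℂ) * ω6 ^ 5 + (119339 : ℂ) * ω6 ^ 4 + (-141674 : ℂ) * ω6 ^ 3 + (112347 : ℂ) * ω6 ^ 2 + (-53403 : ℂ) * ω6 + (11466 : ℂ)) * X 0 5) * hw0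
    · show ((((1:ℂ)) - (-ω6)) ^ 13 + 26 * (((1:ℂ)) - (-ω6)) ^ 7 - 27 * (((1:ℂ)) - (-ω6))) * X 0 6 = 0
      linear_combination (((1 : ℂ) * ω6 ^ 11 + (14 : ℂ) * ω6 ^ 10 + (91 : ℂ) * ω6 ^ 9 + (363 : ℂ) * ω6 ^ 8 + (987 : ℂ) * ω6 ^ 7 + (1911 : ℂ) * ω6 ^ 6 + (2666 : ℂ) * ω6 ^ 5 + (2653 : ℂ) * ω6 ^ 4 + (1820 : ℂ) * ω6 ^ 3 + (792 : ℂ) * ω6 ^ 2 + (168 : ℂ) * ω6) * X 0 6) * hw0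
    · show ((((1:ℂ)) - ((-1:ℂ))) ^ 13 + 26 * (((1:ℂ)) - ((-1:ℂ))) ^ 7 - 27 * (((1:ℂ)) - ((-1:ℂ)))) * X 0 7 = 0
      rw [hz07, mul_zero]
    · show (((ω6) - ((1:ℂ))) ^ 13 + 26 * ((ω6) - ((1:ℂ))) ^ 7 - 27 * ((ω6) - ((1:ℂ)))) * X 1 0 = 0
      linear_combination (((1 : ℂ) * ω6 ^ 11 + (-12 : ℂ) * ω6 ^ 10 + (65 : ℂ) * ω6 ^ 9 + (-209 : ℂ) * ω6 ^ 8 + (441 : ℂ) * ω6 ^ 7 + (-637 : ℂ) * ω6 ^ 6 + (664 : ℂ) * ω6 ^ 5 + (-597 : ℂ) * ω6 ^ 4 + (572 : ℂ) * ω6 ^ 3 + (-456 : ℂ) * ω6 ^ 2 + (168 : ℂ) * ω6) * X 1 0) * hw0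
    · show (((ω6) - (ω6)) ^ 13 + 26 * ((ω6) - (ω6)) ^ 7 - 27 * ((ω6) - (ω6))) * X 1 1 = 0
      linear_combination (((0 : ℂ)) * X 1 1) * hw0
    · show (((ω6) - ((1:ℂ) - ω6)) ^ 13 + 26 * ((ω6) - ((1:ℂ) - ω6)) ^ 7 - 27 * ((ω6) - ((1:ℂ) - ω6))) * X 1 2 = 0
      linear_combination (((8192 : ℂ) * ω6 ^ 11 + (-45056 : ℂ) * ω6 ^ 10 + (106496 : ℂ) * ω6 ^ 9 + (-141312 : ℂ) * ω6 ^ 8 + (118272 : ℂ) * ω6 ^ 7 + (-69888 : ℂ) * ω6 ^ 6 + (34816 : ℂ) * ω6 ^ 5 + (-16768 : ℂ) * ω6 ^ 4 + (7072 : ℂ) * ω6 ^ 3 + (-2160 : ℂ) * ω6 ^ 2 + (336 : ℂ) * ω6) * X 1 2) * hw0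
    · show (((ω6) - ((0:ℂ))) ^ 13 + 26 * ((ω6) - ((0:ℂ))) ^ 7 - 27 * ((ω6) - ((0:ℂ)))) * X 1 3 = 0
      linear_combination (((1 : ℂ) * ω6 ^ 11 + (1 : ℂ) * ω6 ^ 10 + (-1 : ℂ) * ω6 ^ 8 + (-1 : ℂ) * ω6 ^ 7 + (27 : ℂ) * ω6 ^ 5 + (27 : ℂ) * ω6 ^ 4 + (-27 : ℂ) * ω6 ^ 2 + (-27 : ℂ) * ω6) * X 1 3) * hw0
    · show (((ω6) - ((0:ℂ))) ^ 13 + 26 * ((ω6) - ((0:ℂ))) ^ 7 - 27 * ((ω6) - ((0:ℂ)))) * X 1 4 = 0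
      linear_combination (((1 : ℂ) * ω6 ^ 11 + (1 : ℂ) * ω6 ^ 10 + (-1 : ℂ) * ω6 ^ 8 + (-1 : ℂ) * ω6 ^ 7 + (27 : ℂ) * ω6 ^ 5 + (27 : ℂ) * ω6 ^ 4 + (-27 : ℂ) * ω6 ^ 2 + (-27 : ℂ) * ω6) * X 1 4) * hw0
    · show (((ω6) - (ω6 - (1:ℂ))) ^ 13 + 26 * ((ω6) - (ω6 - (1:ℂ))) ^ 7 - 27 * ((ω6) - (ω6 - (1:ℂ)))) * X 1 5 = 0
      linear_combination (((0 : ℂ)) * X 1 5) * hw0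
    · show (((ω6) - (-ω6)) ^ 13 + 26 * ((ω6) - (-ω6)) ^ 7 - 27 * ((ω6) - (-ω6))) * X 1 6 = 0
      rw [hz16, mul_zero]
    · show (((ω6) - ((-1:ℂ))) ^ 13 + 26 * ((ω6) - ((-1:ℂ))) ^ 7 - 27 * ((ω6) - ((-1:ℂ)))) * X 1 7 = 0
      linear_combination (((1 : ℂ) * ω6 ^ 11 + (14 : ℂ) * ω6 ^ 10 + (91 : ℂ) * ω6 ^ 9 + (363 : ℂ) * ω6 ^ 8 + (987 : ℂ) * ω6 ^ 7 + (1911 : ℂ) * ω6 ^ 6 + (2666 : ℂ) * ω6 ^ 5 + (2653 : ℂ) * ω6 ^ 4 + (1820 : ℂ) * ω6 ^ 3 + (792 : ℂ) * ω6 ^ 2 + (168 : ℂ) * ω6) * X 1 7) * hw0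
    · show ((((1:ℂ) - ω6) - ((1:ℂ))) ^ 13 + 26 * (((1:ℂ) - ω6) - ((1:ℂ))) ^ 7 - 27 * (((1:ℂ) - ω6) - ((1:ℂ)))) * X 2 0 = 0
      linear_combination (((-1 : ℂ) * ω6 ^ 11 + (-1 : ℂ) * ω6 ^ 10 + (1 : ℂ) * ω6 ^ 8 + (1 : ℂ) * ω6 ^ 7 + (-27 : ℂ) * ω6 ^ 5 + (-27 : ℂ) * ω6 ^ 4 + (27 : ℂ) * ω6 ^ 2 + (27 : ℂ) * ω6) * X 2 0) * hw0
    · show ((((1:ℂ) - ω6) - (ω6)) ^ 13 + 26 * (((1:ℂ) - ω6) - (ω6)) ^ 7 - 27 * (((1:ℂ) - ω6) - (ω6))) * X 2 1 = 0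
      linear_combination (((-8192 : ℂ) * ω6 ^ 11 + (45056 : ℂ) * ω6 ^ 10 + (-106496 : ℂ) * ω6 ^ 9 + (141312 : ℂ) * ω6 ^ 8 + (-118272 : ℂ) * ω6 ^ 7 + (69888 : ℂ) * ω6 ^ 6 + (-34816 : ℂ) * ω6 ^ 5 + (16768 : ℂ) * ω6 ^ 4 + (-7072 : ℂ) * ω6 ^ 3 + (2160 : ℂ) * ω6 ^ 2 + (-336 : ℂ) * ω6) * X 2 1) * hw0
    · show ((((1:ℂ) - ω6) - ((1:ℂ) - ω6)) ^ 13 + 26 * (((1:ℂ) - ω6) - ((1:ℂ) - ω6)) ^ 7 - 27 * (((1:ℂ) - ω6) - ((1:ℂ) - ω6))) * X 2 2 = 0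
      linear_combination (((0 : ℂ)) * X 2 2) * hw0
    · show ((((1:ℂ) - ω6) - ((0:ℂ))) ^ 13 + 26 * (((1:ℂ) - ω6) - ((0:ℂ))) ^ 7 - 27 * (((1:ℂ) - ω6) - ((0:ℂ)))) * X 2 3 = 0
      linear_combination (((-1 : ℂ) * ω6 ^ 11 + (12 : ℂ) * ω6 ^ 10 + (-65 : ℂ) * ω6 ^ 9 + (209 : ℂ) * ω6 ^ 8 + (-441 : ℂ) * ω6 ^ 7 + (637 : ℂ) * ω6 ^ 6 + (-664 : ℂ) * ω6 ^ 5 + (597 : ℂ) * ω6 ^ 4 + (-572 : ℂ) * ω6 ^ 3 + (456 : ℂ) * ω6 ^ 2 + (-168 : ℂ) * ω6) * X 2 3) * hw0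
    · show ((((1:ℂ) - ω6) - ((0:ℂ))) ^ 13 + 26 * (((1:ℂ) - ω6) - ((0:ℂ))) ^ 7 - 27 * (((1:ℂ) - ω6) - ((0:ℂ)))) * X 2 4 = 0
      linear_combination (((-1 : ℂ) * ω6 ^ 11 + (12 : ℂ) * ω6 ^ 10 + (-65 : ℂ) * ω6 ^ 9 + (209 : ℂ) * ω6 ^ 8 + (-441 : ℂ) * ω6 ^ 7 + (637 : ℂ) * ω6 ^ 6 + (-664 : ℂ) * ω6 ^ 5 + (597 : ℂ) * ω6 ^ 4 + (-572 : ℂ) * ω6 ^ 3 + (456 : ℂ) * ω6 ^ 2 + (-168 : ℂ) * ω6) * X 2 4) * hw0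
    · show ((((1:ℂ) - ω6) - (ω6 - (1:ℂ))) ^ 13 + 26 * (((1:ℂ) - ω6) - (ω6 - (1:ℂ))) ^ 7 - 27 * (((1:ℂ) - ω6) - (ω6 - (1:ℂ)))) * X 2 5 = 0
      rw [hz25, mul_zero]
    · show ((((1:ℂ) - ω6) - (-ω6)) ^ 13 + 26 * (((1:ℂ) - ω6) - (-ω6)) ^ 7 - 27 * (((1:ℂ) - ω6) - (-ω6))) * X 2 6 = 0
      linear_combination (((0 : ℂ)) * X 2 6) * hw0
    · show ((((1:ℂ) - ω6) - ((-1:ℂ))) ^ 13 + 26 * (((1:ℂ) - ω6) - ((-1:ℂ))) ^ 7 - 27 * (((1:ℂ) - ω6) - ((-1:ℂ)))) * X 2 7 = 0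
      linear_combination (((-1 : ℂ) * ω6 ^ 11 + (25 : ℂ) * ω6 ^ 10 + (-286 : ℂ) * ω6 ^ 9 + (1977 : ℂ) * ω6 ^ 8 + (-9177 : ℂ) * ω6 ^ 7 + (30030 : ℂ) * ω6 ^ 6 + (-70643 : ℂ) * ω6 ^ 5 + (119339 : ℂ) * ω6 ^ 4 + (-141674 : ℂ) * ω6 ^ 3 + (112347 : ℂ) * ω6 ^ 2 + (-53403 : ℂ) * ω6 + (11466 : ℂ)) * X 2 7) * hw0
    · show ((((0:ℂ)) - ((1:ℂ))) ^ 13 + 26 * (((0:ℂ)) - ((1:ℂ))) ^ 7 - 27 * (((0:ℂ)) - ((1:ℂ)))) * X 3 0 = 0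
      linear_combination (((0 : ℂ)) * X 3 0) * hw0
    · show ((((0:ℂ)) - (ω6)) ^ 13 + 26 * (((0:ℂ)) - (ω6)) ^ 7 - 27 * (((0:ℂ)) - (ω6))) * X 3 1 = 0
      linear_combination (((-1 : ℂ) * ω6 ^ 11 + (-1 : ℂ) * ω6 ^ 10 + (1 : ℂ) * ω6 ^ 8 + (1 : ℂ) * ω6 ^ 7 + (-27 : ℂ) * ω6 ^ 5 + (-27 : ℂ) * ω6 ^ 4 + (27 : ℂ) * ω6 ^ 2 + (27 : ℂ) * ω6) * X 3 1) * hw0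
    · show ((((0:ℂ)) - ((1:ℂ) - ω6)) ^ 13 + 26 * (((0:ℂ)) - ((1:ℂ) - ω6)) ^ 7 - 27 * (((0:ℂ)) - ((1:ℂ) - ω6))) * X 3 2 = 0
      linear_combination (((1 : ℂ) * ω6 ^ 11 + (-12 : ℂ) * ω6 ^ 10 + (65 : ℂ) * ω6 ^ 9 + (-209 : ℂ) * ω6 ^ 8 + (441 : ℂ) * ω6 ^ 7 + (-637 : ℂ) * ω6 ^ 6 + (664 : ℂ) * ω6 ^ 5 + (-597 : ℂ) * ω6 ^ 4 + (572 : ℂ) * ω6 ^ 3 + (-456 : ℂ) * ω6 ^ 2 + (168 : ℂ) * ω6) * X 3 2) * hw0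
    · show ((((0:ℂ)) - ((0:ℂ))) ^ 13 + 26 * (((0:ℂ)) - ((0:ℂ))) ^ 7 - 27 * (((0:ℂ)) - ((0:ℂ)))) * X 3 3 = 0
      linear_combination (((0 : ℂ)) * X 3 3) * hw0
    · show ((((0:ℂ)) - ((0:ℂ))) ^ 13 + 26 * (((0:ℂ)) - ((0:ℂ))) ^ 7 - 27 * (((0:ℂ)) - ((0:ℂ)))) * X 3 4 = 0
      linear_combination (((0 : ℂ)) * X 3 4) * hw0
    · show ((((0:ℂ)) - (ω6 - (1:ℂ))) ^ 13 + 26 * (((0:ℂ)) - (ω6 - (1:ℂ))) ^ 7 - 27 * (((0:ℂ)) - (ω6 - (1:ℂ)))) * X 3 5 = 0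
      linear_combination (((-1 : ℂ) * ω6 ^ 11 + (12 : ℂ) * ω6 ^ 10 + (-65 : ℂ) * ω6 ^ 9 + (209 : ℂ) * ω6 ^ 8 + (-441 : ℂ) * ω6 ^ 7 + (637 : ℂ) * ω6 ^ 6 + (-664 : ℂ) * ω6 ^ 5 + (597 : ℂ) * ω6 ^ 4 + (-572 : ℂ) * ω6 ^ 3 + (456 : ℂ) * ω6 ^ 2 + (-168 : ℂ) * ω6) * X 3 5) * hw0
    · show ((((0:ℂ)) - (-ω6)) ^ 13 + 26 * (((0:ℂ)) - (-ω6)) ^ 7 - 27 * (((0:ℂ)) - (-ω6))) * X 3 6 = 0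
      linear_combination (((1 : ℂ) * ω6 ^ 11 + (1 : ℂ) * ω6 ^ 10 + (-1 : ℂ) * ω6 ^ 8 + (-1 : ℂ) * ω6 ^ 7 + (27 : ℂ) * ω6 ^ 5 + (27 : ℂ) * ω6 ^ 4 + (-27 : ℂ) * ω6 ^ 2 + (-27 : ℂ) * ω6) * X 3 6) * hw0
    · show ((((0:ℂ)) - ((-1:ℂ))) ^ 13 + 26 * (((0:ℂ)) - ((-1:ℂ))) ^ 7 - 27 * (((0:ℂ)) - ((-1:ℂ)))) * X 3 7 = 0
      linear_combination (((0 : ℂ)) * X 3 7) * hw0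
    · show ((((0:ℂ)) - ((1:ℂ))) ^ 13 + 26 * (((0:ℂ)) - ((1:ℂ))) ^ 7 - 27 * (((0:ℂ)) - ((1:ℂ)))) * X 4 0 = 0
      linear_combination (((0 : ℂ)) * X 4 0) * hw0
    · show ((((0:ℂ)) - (ω6)) ^ 13 + 26 * (((0:ℂ)) - (ω6)) ^ 7 - 27 * (((0:ℂ)) - (ω6))) * X 4 1 = 0
      linear_combination (((-1 : ℂ) * ω6 ^ 11 + (-1 : ℂ) * ω6 ^ 10 + (1 : ℂ) * ω6 ^ 8 + (1 : ℂ) * ω6 ^ 7 + (-27 : ℂ) * ω6 ^ 5 + (-27 : ℂ) * ω6 ^ 4 + (27 : ℂ) * ω6 ^ 2 + (27 : ℂ) * ω6) * X 4 1) * hw0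
    · show ((((0:ℂ)) - ((1:ℂ) - ω6)) ^ 13 + 26 * (((0:ℂ)) - ((1:ℂ) - ω6)) ^ 7 - 27 * (((0:ℂ)) - ((1:ℂ) - ω6))) * X 4 2 = 0
      linear_combination (((1 : ℂ) * ω6 ^ 11 + (-12 : ℂ) * ω6 ^ 10 + (65 : ℂ) * ω6 ^ 9 + (-209 : ℂ) * ω6 ^ 8 + (441 : ℂ) * ω6 ^ 7 + (-637 : ℂ) * ω6 ^ 6 + (664 : ℂ) * ω6 ^ 5 + (-597 : ℂ) * ω6 ^ 4 + (572 : ℂ) * ω6 ^ 3 + (-456 : ℂ) * ω6 ^ 2 + (168 : ℂ) * ω6) * X 4 2) * hw0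
    · show ((((0:ℂ)) - ((0:ℂ))) ^ 13 + 26 * (((0:ℂ)) - ((0:ℂ))) ^ 7 - 27 * (((0:ℂ)) - ((0:ℂ)))) * X 4 3 = 0
      linear_combination (((0 : ℂ)) * X 4 3) * hw0
    · show ((((0:ℂ)) - ((0:ℂ))) ^ 13 + 26 * (((0:ℂ)) - ((0:ℂ))) ^ 7 - 27 * (((0:ℂ)) - ((0:ℂ)))) * X 4 4 = 0
      linear_combination (((0 : ℂ)) * X 4 4) * hw0
    · show ((((0:ℂ)) - (ω6 - (1:ℂ))) ^ 13 + 26 * (((0:ℂ)) - (ω6 - (1:ℂ))) ^ 7 - 27 * (((0:ℂ)) - (ω6 - (1:ℂ)))) * X 4 5 = 0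
      linear_combination (((-1 : ℂ) * ω6 ^ 11 + (12 : ℂ) * ω6 ^ 10 + (-65 : ℂ) * ω6 ^ 9 + (209 : ℂ) * ω6 ^ 8 + (-441 : ℂ) * ω6 ^ 7 + (637 : ℂ) * ω6 ^ 6 + (-664 : ℂ) * ω6 ^ 5 + (597 : ℂ) * ω6 ^ 4 + (-572 : ℂ) * ω6 ^ 3 + (456 : ℂ) * ω6 ^ 2 + (-168 : ℂ) * ω6) * X 4 5) * hw0
    · show ((((0:ℂ)) - (-ω6)) ^ 13 + 26 * (((0:ℂ)) - (-ω6)) ^ 7 - 27 * (((0:ℂ)) - (-ω6))) * X 4 6 = 0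
      linear_combination (((1 : ℂ) * ω6 ^ 11 + (1 : ℂ) * ω6 ^ 10 + (-1 : ℂ) * ω6 ^ 8 + (-1 : ℂ) * ω6 ^ 7 + (27 : ℂ) * ω6 ^ 5 + (27 : ℂ) * ω6 ^ 4 + (-27 : ℂ) * ω6 ^ 2 + (-27 : ℂ) * ω6) * X 4 6) * hw0
    · show ((((0:ℂ)) - ((-1:ℂ))) ^ 13 + 26 * (((0:ℂ)) - ((-1:ℂ))) ^ 7 - 27 * (((0:ℂ)) - ((-1:ℂ)))) * X 4 7 = 0
      linear_combination (((0 : ℂ)) * X 4 7) * hw0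
    · show (((ω6 - (1:ℂ)) - ((1:ℂ))) ^ 13 + 26 * ((ω6 - (1:ℂ)) - ((1:ℂ))) ^ 7 - 27 * ((ω6 - (1:ℂ)) - ((1:ℂ)))) * X 5 0 = 0
      linear_combination (((1 : ℂ) * ω6 ^ 11 + (-25 : ℂ) * ω6 ^ 10 + (286 : ℂ) * ω6 ^ 9 + (-1977 : ℂ) * ω6 ^ 8 + (9177 : ℂ) * ω6 ^ 7 + (-30030 : ℂ) * ω6 ^ 6 + (70643 : ℂ) * ω6 ^ 5 + (-119339 : ℂ) * ω6 ^ 4 + (141674 : ℂ) * ω6 ^ 3 + (-112347 : ℂ) * ω6 ^ 2 + (53403 : ℂ) * ω6 + (-11466 : ℂ)) * X 5 0) * hw0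
    · show (((ω6 - (1:ℂ)) - (ω6)) ^ 13 + 26 * ((ω6 - (1:ℂ)) - (ω6)) ^ 7 - 27 * ((ω6 - (1:ℂ)) - (ω6))) * X 5 1 = 0
      linear_combination (((0 : ℂ)) * X 5 1) * hw0
    · show (((ω6 - (1:ℂ)) - ((1:ℂ) - ω6)) ^ 13 + 26 * ((ω6 - (1:ℂ)) - ((1:ℂ) - ω6)) ^ 7 - 27 * ((ω6 - (1:ℂ)) - ((1:ℂ) - ω6))) * X 5 2 = 0
      rw [hz52, mul_zero]
    · show (((ω6 - (1:ℂ)) - ((0:ℂ))) ^ 13 + 26 * ((ω6 - (1:ℂ)) - ((0:ℂ))) ^ 7 - 27 * ((ω6 - (1:ℂ)) - ((0:ℂ)))) * X 5 3 = 0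
      linear_combination (((1 : ℂ) * ω6 ^ 11 + (-12 : ℂ) * ω6 ^ 10 + (65 : ℂ) * ω6 ^ 9 + (-209 : ℂ) * ω6 ^ 8 + (441 : ℂ) * ω6 ^ 7 + (-637 : ℂ) * ω6 ^ 6 + (664 : ℂ) * ω6 ^ 5 + (-597 : ℂ) * ω6 ^ 4 + (572 : ℂ) * ω6 ^ 3 + (-456 : ℂ) * ω6 ^ 2 + (168 : ℂ) * ω6) * X 5 3) * hw0
    · show (((ω6 - (1:ℂ)) - ((0:ℂ))) ^ 13 + 26 * ((ω6 - (1:ℂ)) - ((0:ℂ))) ^ 7 - 27 * ((ω6 - (1:ℂ)) - ((0:ℂ)))) * X 5 4 = 0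
      linear_combination (((1 : ℂ) * ω6 ^ 11 + (-12 : ℂ) * ω6 ^ 10 + (65 : ℂ) * ω6 ^ 9 + (-209 : ℂ) * ω6 ^ 8 + (441 : ℂ) * ω6 ^ 7 + (-637 : ℂ) * ω6 ^ 6 + (664 : ℂ) * ω6 ^ 5 + (-597 : ℂ) * ω6 ^ 4 + (572 : ℂ) * ω6 ^ 3 + (-456 : ℂ) * ω6 ^ 2 + (168 : ℂ) * ω6) * X 5 4) * hw0
    · show (((ω6 - (1:ℂ)) - (ω6 - (1:ℂ))) ^ 13 + 26 * ((ω6 - (1:ℂ)) - (ω6 - (1:ℂ))) ^ 7 - 27 * ((ω6 - (1:ℂ)) - (ω6 - (1:ℂ)))) * X 5 5 = 0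
      linear_combination (((0 : ℂ)) * X 5 5) * hw0
    · show (((ω6 - (1:ℂ)) - (-ω6)) ^ 13 + 26 * ((ω6 - (1:ℂ)) - (-ω6)) ^ 7 - 27 * ((ω6 - (1:ℂ)) - (-ω6))) * X 5 6 = 0
      linear_combination (((8192 : ℂ) * ω6 ^ 11 + (-45056 : ℂ) * ω6 ^ 10 + (106496 : ℂ) * ω6 ^ 9 + (-141312 : ℂ) * ω6 ^ 8 + (118272 : ℂ) * ω6 ^ 7 + (-69888 : ℂ) * ω6 ^ 6 + (34816 : ℂ) * ω6 ^ 5 + (-16768 : ℂ) * ω6 ^ 4 + (7072 : ℂ) * ω6 ^ 3 + (-2160 : ℂ) * ω6 ^ 2 + (336 : ℂ) * ω6) * X 5 6) * hw0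
    · show (((ω6 - (1:ℂ)) - ((-1:ℂ))) ^ 13 + 26 * ((ω6 - (1:ℂ)) - ((-1:ℂ))) ^ 7 - 27 * ((ω6 - (1:ℂ)) - ((-1:ℂ)))) * X 5 7 = 0
      linear_combination (((1 : ℂ) * ω6 ^ 11 + (1 : ℂ) * ω6 ^ 10 + (-1 : ℂ) * ω6 ^ 8 + (-1 : ℂ) * ω6 ^ 7 + (27 : ℂ) * ω6 ^ 5 + (27 : ℂ) * ω6 ^ 4 + (-27 : ℂ) * ω6 ^ 2 + (-27 : ℂ) * ω6) * X 5 7) * hw0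
    · show (((-ω6) - ((1:ℂ))) ^ 13 + 26 * ((-ω6) - ((1:ℂ))) ^ 7 - 27 * ((-ω6) - ((1:ℂ)))) * X 6 0 = 0
      linear_combination (((-1 : ℂ) * ω6 ^ 11 + (-14 : ℂ) * ω6 ^ 10 + (-91 : ℂ) * ω6 ^ 9 + (-363 : ℂ) * ω6 ^ 8 + (-987 : ℂ) * ω6 ^ 7 + (-1911 : ℂ) * ω6 ^ 6 + (-2666 : ℂ) * ω6 ^ 5 + (-2653 : ℂ) * ω6 ^ 4 + (-1820 : ℂ) * ω6 ^ 3 + (-792 : ℂ) * ω6 ^ 2 + (-168 : ℂ) * ω6) * X 6 0) * hw0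
    · show (((-ω6) - (ω6)) ^ 13 + 26 * ((-ω6) - (ω6)) ^ 7 - 27 * ((-ω6) - (ω6))) * X 6 1 = 0
      rw [hz61, mul_zero]
    · show (((-ω6) - ((1:ℂ) - ω6)) ^ 13 + 26 * ((-ω6) - ((1:ℂ) - ω6)) ^ 7 - 27 * ((-ω6) - ((1:ℂ) - ω6))) * X 6 2 = 0
      linear_combination (((0 : ℂ)) * X 6 2) * hw0
    · show (((-ω6) - ((0:ℂ))) ^ 13 + 26 * ((-ω6) - ((0:ℂ))) ^ 7 - 27 * ((-ω6) - ((0:ℂ)))) * X 6 3 = 0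
      linear_combination (((-1 : ℂ) * ω6 ^ 11 + (-1 : ℂ) * ω6 ^ 10 + (1 : ℂ) * ω6 ^ 8 + (1 : ℂ) * ω6 ^ 7 + (-27 : ℂ) * ω6 ^ 5 + (-27 : ℂ) * ω6 ^ 4 + (27 : ℂ) * ω6 ^ 2 + (27 : ℂ) * ω6) * X 6 3) * hw0
    · show (((-ω6) - ((0:ℂ))) ^ 13 + 26 * ((-ω6) - ((0:ℂ))) ^ 7 - 27 * ((-ω6) - ((0:ℂ)))) * X 6 4 = 0
      linear_combination (((-1 : ℂ) * ω6 ^ 11 + (-1 : ℂ) * ω6 ^ 10 + (1 : ℂ) * ω6 ^ 8 + (1 : ℂ) * ω6 ^ 7 + (-27 : ℂ) * ω6 ^ 5 + (-27 : ℂ) * ω6 ^ 4 + (27 : ℂ) * ω6 ^ 2 + (27 : ℂ) * ω6) * X 6 4) * hw0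
    · show (((-ω6) - (ω6 - (1:ℂ))) ^ 13 + 26 * ((-ω6) - (ω6 - (1:ℂ))) ^ 7 - 27 * ((-ω6) - (ω6 - (1:ℂ)))) * X 6 5 = 0
      linear_combination (((-8192 : ℂ) * ω6 ^ 11 + (45056 : ℂ) * ω6 ^ 10 + (-106496 : ℂ) * ω6 ^ 9 + (141312 : ℂ) * ω6 ^ 8 + (-118272 : ℂ) * ω6 ^ 7 + (69888 : ℂ) * ω6 ^ 6 + (-34816 : ℂ) * ω6 ^ 5 + (16768 : ℂ) * ω6 ^ 4 + (-7072 : ℂ) * ω6 ^ 3 + (2160 : ℂ) * ω6 ^ 2 + (-336 : ℂ) * ω6) * X 6 5) * hw0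
    · show (((-ω6) - (-ω6)) ^ 13 + 26 * ((-ω6) - (-ω6)) ^ 7 - 27 * ((-ω6) - (-ω6))) * X 6 6 = 0
      linear_combination (((0 : ℂ)) * X 6 6) * hw0
    · show (((-ω6) - ((-1:ℂ))) ^ 13 + 26 * ((-ω6) - ((-1:ℂ))) ^ 7 - 27 * ((-ω6) - ((-1:ℂ)))) * X 6 7 = 0
      linear_combination (((-1 : ℂ) * ω6 ^ 11 + (12 : ℂ) * ω6 ^ 10 + (-65 : ℂ) * ω6 ^ 9 + (209 : ℂ) * ω6 ^ 8 + (-441 : ℂ) * ω6 ^ 7 + (637 : ℂ) * ω6 ^ 6 + (-664 : ℂ) * ω6 ^ 5 + (597 : ℂ) * ω6 ^ 4 + (-572 : ℂ) * ω6 ^ 3 + (456 : ℂ) * ω6 ^ 2 + (-168 : ℂ) * ω6) * X 6 7) * hw0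
    · show ((((-1:ℂ)) - ((1:ℂ))) ^ 13 + 26 * (((-1:ℂ)) - ((1:ℂ))) ^ 7 - 27 * (((-1:ℂ)) - ((1:ℂ)))) * X 7 0 = 0
      rw [hz70, mul_zero]
    · show ((((-1:ℂ)) - (ω6)) ^ 13 + 26 * (((-1:ℂ)) - (ω6)) ^ 7 - 27 * (((-1:ℂ)) - (ω6))) * X 7 1 = 0
      linear_combination (((-1 : ℂ) * ω6 ^ 11 + (-14 : ℂ) * ω6 ^ 10 + (-91 : ℂ) * ω6 ^ 9 + (-363 : ℂ) * ω6 ^ 8 + (-987 : ℂ) * ω6 ^ 7 + (-1911 : ℂ) * ω6 ^ 6 + (-2666 : ℂ) * ω6 ^ 5 + (-2653 : ℂ) * ω6 ^ 4 + (-1820 : ℂ) * ω6 ^ 3 + (-792 : ℂ) * ω6 ^ 2 + (-168 : ℂ) * ω6) * X 7 1) * hw0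
    · show ((((-1:ℂ)) - ((1:ℂ) - ω6)) ^ 13 + 26 * (((-1:ℂ)) - ((1:ℂ) - ω6)) ^ 7 - 27 * (((-1:ℂ)) - ((1:ℂ) - ω6))) * X 7 2 = 0
      linear_combination (((1 : ℂ) * ω6 ^ 11 + (-25 : ℂ) * ω6 ^ 10 + (286 : ℂ) * ω6 ^ 9 + (-1977 : ℂ) * ω6 ^ 8 + (9177 : ℂ) * ω6 ^ 7 + (-30030 : ℂ) * ω6 ^ 6 + (70643 : ℂ) * ω6 ^ 5 + (-119339 : ℂ) * ω6 ^ 4 + (141674 : ℂ) * ω6 ^ 3 + (-112347 : ℂ) * ω6 ^ 2 + (53403 : ℂ) * ω6 + (-11466 : ℂ)) * X 7 2) * hw0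
    · show ((((-1:ℂ)) - ((0:ℂ))) ^ 13 + 26 * (((-1:ℂ)) - ((0:ℂ))) ^ 7 - 27 * (((-1:ℂ)) - ((0:ℂ)))) * X 7 3 = 0
      linear_combination (((0 : ℂ)) * X 7 3) * hw0
    · show ((((-1:ℂ)) - ((0:ℂ))) ^ 13 + 26 * (((-1:ℂ)) - ((0:ℂ))) ^ 7 - 27 * (((-1:ℂ)) - ((0:ℂ)))) * X 7 4 = 0
      linear_combination (((0 : ℂ)) * X 7 4) * hw0
    · show ((((-1:ℂ)) - (ω6 - (1:ℂ))) ^ 13 + 26 * (((-1:ℂ)) - (ω6 - (1:ℂ))) ^ 7 - 27 * (((-1:ℂ)) - (ω6 - (1:ℂ)))) * X 7 5 = 0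
      linear_combination (((-1 : ℂ) * ω6 ^ 11 + (-1 : ℂ) * ω6 ^ 10 + (1 : ℂ) * ω6 ^ 8 + (1 : ℂ) * ω6 ^ 7 + (-27 : ℂ) * ω6 ^ 5 + (-27 : ℂ) * ω6 ^ 4 + (27 : ℂ) * ω6 ^ 2 + (27 : ℂ) * ω6) * X 7 5) * hw0
    · show ((((-1:ℂ)) - (-ω6)) ^ 13 + 26 * (((-1:ℂ)) - (-ω6)) ^ 7 - 27 * (((-1:ℂ)) - (-ω6))) * X 7 6 = 0
      linear_combination (((1 : ℂ) * ω6 ^ 11 + (-12 : ℂ) * ω6 ^ 10 + (65 : ℂ) * ω6 ^ 9 + (-209 : ℂ) * ω6 ^ 8 + (441 : ℂ) * ω6 ^ 7 + (-637 : ℂ) * ω6 ^ 6 + (664 : ℂ) * ω6 ^ 5 + (-597 : ℂ) * ω6 ^ 4 + (572 : ℂ) * ω6 ^ 3 + (-456 : ℂ) * ω6 ^ 2 + (168 : ℂ) * ω6) * X 7 6) * hw0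
    · show ((((-1:ℂ)) - ((-1:ℂ))) ^ 13 + 26 * (((-1:ℂ)) - ((-1:ℂ))) ^ 7 - 27 * (((-1:ℂ)) - ((-1:ℂ)))) * X 7 7 = 0
      linear_combination (((0 : ℂ)) * X 7 7) * hw0

  ext i j
  have h1 : adJ X i j = (dd i - dd j) * X i j := by
    have := key 1 i j
    rwa [Function.iterate_one, pow_one] at this
  simp only [Matrix.add_apply, Matrix.sub_apply, Matrix.smul_apply, Matrix.zero_apply,
    smul_eq_mul, key, h1]
  linear_combination main i j
end

section
/- Let ω = exp(iπ/3), J = diag(1, ω, ω⁵, 0, 0, −ω⁵, −ω, −1), ad_J(X) = J X − X J, and define R = (1/27)(26 ad_J⁵ + ad_J¹¹). Then for every X in the image of ad_J restricted to so(8,S) (i.e., X = J Z − Z J for some Z ∈ so(8,S)), one has ad_J(R(X)) = X and R(ad_J(X)) = X; thus R inverts ad_J on its image, realizing the formula ad_J⁻¹ = (1/27)(26 ad_J⁵ + ad_J¹¹). -/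
open Matrix

/-- The candidate inverse `R = (1/27)(26 ad_J⁵ + ad_J¹¹)`. -/
noncomputable def R8 (X : Matrix (Fin 8) (Fin 8) ℂ) : Matrix (Fin 8) (Fin 8) ℂ :=
  (1 / 27 : ℂ) • ((26 : ℂ) • adJ^[5] X + adJ^[11] X)

section VecEval
variable {α : Type*} (a b c d e f g h : α)
lemma v8_0 : ![a,b,c,d,e,f,g,h] 0 = a := rfl
lemma v8_1 : ![a,b,c,d,e,f,g,h] 1 = b := rfl
lemma v8_2 : ![a,b,c,d,e,f,g,h] 2 = c := rfl
lemma v8_3 : ![a,b,c,d,e,f,g,h] 3 = d := rfl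
lemma v8_4 : ![a,b,c,d,e,f,g,h] 4 = e := rfl
lemma v8_5 : ![a,b,c,d,e,f,g,h] 5 = f := rfl
lemma v8_6 : ![a,b,c,d,e,f,g,h] 6 = g := rfl
lemma v8_7 : ![a,b,c,d,e,f,g,h] 7 = h := rfl
end VecEval

lemma fm0 (h : 0 < 8) : (⟨0, h⟩ : Fin 8) = 0 := rfl
lemma fm1 (h : 1 < 8) : (⟨1, h⟩ : Fin 8) = 1 := rfl
lemma fm2 (h : 2 < 8) : (⟨2, h⟩ : Fin 8) = 2 := rfl
lemma fm3 (h : 3 < 8) : (⟨3, h⟩ : Fin 8) = 3 := rfl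
lemma fm4 (h : 4 < 8) : (⟨4, h⟩ : Fin 8) = 4 := rfl
lemma fm5 (h : 5 < 8) : (⟨5, h⟩ : Fin 8) = 5 := rfl
lemma fm6 (h : 6 < 8) : (⟨6, h⟩ : Fin 8) = 6 := rfl
lemma fm7 (h : 7 < 8) : (⟨7, h⟩ : Fin 8) = 7 := rfl

lemma ω6_eq : ω6 = (1/2 : ℂ) + ((Real.sqrt 3 : ℝ) : ℂ)/2 * Complex.I := by
  have h : (Real.pi : ℂ) * Complex.I / 3 = (Real.pi/3 : ℝ) * Complex.I := by
    push_cast; ring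
  rw [ω6, h, Complex.exp_mul_I]
  rw [← Complex.ofReal_cos, ← Complex.ofReal_sin, Real.cos_pi_div_three, Real.sin_pi_div_three]
  push_cast; ring

lemma hω2 : ω6 ^ 2 = ω6 - 1 := by
  have hs : ((Real.sqrt 3 : ℝ) : ℂ)^2 = 3 := by
    rw [← Complex.ofReal_pow, Real.sq_sqrt (by norm_num)]; norm_num
  rw [ω6_eq]
  linear_combination (Complex.I^2/4) * hs + (3/4) * Complex.I_sq

lemma hω3 : ω6 ^ 3 = -1 := by linear_combination (ω6 + 1) * hω2

lemma hω5 : ω6 ^ 5 = 1 - ω6 := by linear_combination (ω6^3 + ω6^2 - 1) * hω2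

noncomputable def dvec : Fin 8 → ℂ := ![1, ω6, ω6 ^ 5, 0, 0, -ω6 ^ 5, -ω6, -1]

lemma J8_eq : J8 = Matrix.diagonal dvec := rfl

lemma adJ_apply (X : Matrix (Fin 8) (Fin 8) ℂ) (i j : Fin 8) :
    adJ X i j = (dvec i - dvec j) * X i j := by
  simp [adJ, J8_eq, Matrix.sub_apply, Matrix.diagonal_mul, Matrix.mul_diagonal]
  ring

lemma adJ_iter (n : ℕ) (X : Matrix (Fin 8) (Fin 8) ℂ) (i j : Fin 8) :
    adJ^[n] X i j = (dvec i - dvec j) ^ n * X i j := by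
  induction n with
  | zero => simp
  | succ n ih => rw [Function.iterate_succ_apply', adJ_apply, ih, pow_succ]; ring

lemma keyid {μ z : ℂ} (h : μ^6 = 1 ∨ μ^6 = -27) :
    (26 * μ^6 + μ^12) * (μ * z) = 27 * (μ * z) := by
  have h12 : μ^12 = (μ^6)^2 := by ring
  rcases h with h | h <;> rw [h12, h] <;> ring

lemma hB : ω6^6 = 1 := by linear_combination (ω6^4+ω6^3-ω6-1) * hω2
lemma hC : (1-ω6)^6 = 1 := by
  have h2 : (1-ω6)^2 = -ω6 := by linear_combination hω2
  calc (1-ω6)^6 = ((1-ω6)^2)^3 := by ring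
  _ = -(ω6^3) := by rw [h2]; ring
  _ = 1 := by rw [hω3]; ring
lemma hD : (1+ω6)^6 = -27 := by
  have h2 : (1+ω6)^2 = 3*ω6 := by linear_combination hω2
  calc (1+ω6)^6 = ((1+ω6)^2)^3 := by ring
  _ = 27*(ω6^3) := by rw [h2]; ring
  _ = -27 := by rw [hω3]; ring
lemma hE : (2*ω6-1)^6 = -27 := by
  have h2 : (2*ω6-1)^2 = -3 := by linear_combination 4*hω2
  calc (2*ω6-1)^6 = ((2*ω6-1)^2)^3 := by ring
  _ = -27 := by rw [h2]; ring
lemma hF : (2-ω6)^6 = -27 := by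
  have h2 : (2-ω6)^2 = 3*(1-ω6) := by linear_combination hω2
  have h3 : (1-ω6)^3 = -1 := by linear_combination (2-ω6)*hω2
  calc (2-ω6)^6 = ((2-ω6)^2)^3 := by ring
  _ = 27*((1-ω6)^3) := by rw [h2]; ring
  _ = -27 := by rw [h3]; ring

set_option maxHeartbeats 4000000 in
lemma key (Z : Matrix (Fin 8) (Fin 8) ℂ) (hZ : S8 * Z + Zᵀ * S8 = 0) (i j : Fin 8) :
    (26 * (dvec i - dvec j)^6 + (dvec i - dvec j)^12) * ((dvec i - dvec j) * Z i j)
      = 27 * ((dvec i - dvec j) * Z i j) := by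
  have hZ' : ∀ a b, (S8 * Z + Zᵀ * S8) a b = 0 := fun a b => by rw [hZ]; rfl
  have hza : Z 0 7 = 0 := by
    have := hZ' 7 7
    simp only [S8, Matrix.of_apply, Matrix.mul_apply, Matrix.add_apply, Matrix.transpose_apply,
      Fin.sum_univ_eight, v8_0, v8_1, v8_2, v8_3, v8_4, v8_5, v8_6, v8_7] at this
    linear_combination this / 2
  have hzb : Z 7 0 = 0 := by
    have := hZ' 0 0
    simp only [S8, Matrix.of_apply, Matrix.mul_apply, Matrix.add_apply, Matrix.transpose_apply,
      Fin.sum_univ_eight, v8_0, v8_1, v8_2, v8_3, v8_4, v8_5, v8_6, v8_7] at this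
    linear_combination this / 2
  have hzc : Z 1 6 = 0 := by
    have := hZ' 6 6
    simp only [S8, Matrix.of_apply, Matrix.mul_apply, Matrix.add_apply, Matrix.transpose_apply,
      Fin.sum_univ_eight, v8_0, v8_1, v8_2, v8_3, v8_4, v8_5, v8_6, v8_7] at this
    linear_combination -this / 2
  have hzd : Z 6 1 = 0 := by
    have := hZ' 1 1
    simp only [S8, Matrix.of_apply, Matrix.mul_apply, Matrix.add_apply, Matrix.transpose_apply,
      Fin.sum_univ_eight, v8_0, v8_1, v8_2, v8_3, v8_4, v8_5, v8_6, v8_7] at this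
    linear_combination -this / 2
  have hze : Z 2 5 = 0 := by
    have := hZ' 5 5
    simp only [S8, Matrix.of_apply, Matrix.mul_apply, Matrix.add_apply, Matrix.transpose_apply,
      Fin.sum_univ_eight, v8_0, v8_1, v8_2, v8_3, v8_4, v8_5, v8_6, v8_7] at this
    linear_combination this / 2
  have hzf : Z 5 2 = 0 := by
    have := hZ' 2 2
    simp only [S8, Matrix.of_apply, Matrix.mul_apply, Matrix.add_apply, Matrix.transpose_apply,
      Fin.sum_univ_eight, v8_0, v8_1, v8_2, v8_3, v8_4, v8_5, v8_6, v8_7] at this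
    linear_combination this / 2
  clear hZ hZ'
  fin_cases i <;> fin_cases j <;>
    simp only [fm0, fm1, fm2, fm3, fm4, fm5, fm6, fm7, dvec, hω5, v8_0, v8_1, v8_2, v8_3, v8_4, v8_5, v8_6, v8_7] <;>
    first
    | (refine keyid (Or.inl ?_); ring1)
    | (refine keyid (Or.inl ?_); linear_combination hB)
    | (refine keyid (Or.inl ?_); linear_combination hC)
    | (refine keyid (Or.inr ?_); linear_combination hD)
    | (refine keyid (Or.inr ?_); linear_combination hE)
    | (refine keyid (Or.inr ?_); linear_combination hF)
    | (rw [hza]; ring1)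
    | (rw [hzb]; ring1)
    | (rw [hzc]; ring1)
    | (rw [hzd]; ring1)
    | (rw [hze]; ring1)
    | (rw [hzf]; ring1)
    | ring1

/-- `R = (1/27)(26 ad_J⁵ + ad_J¹¹)` inverts `ad_J` on the image of
`ad_J` restricted to `so(8,S)`: for every `X = J Z − Z J` with `Z ∈ so(8,S)` one has
`ad_J(R(X)) = X` and `R(ad_J(X)) = X`; this realizes `ad_J⁻¹ = (1/27)(26 ad_J⁵ + ad_J¹¹)`. -/
theorem statement_8 (X : Matrix (Fin 8) (Fin 8) ℂ)
    (hX : ∃ Z : Matrix (Fin 8) (Fin 8) ℂ, S8 * Z + Zᵀ * S8 = 0 ∧ X = J8 * Z - Z * J8) :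
    adJ (R8 X) = X ∧ R8 (adJ X) = X := by
  obtain ⟨Z, hZ, hXZ⟩ := hX
  have hXe : ∀ i j, X i j = (dvec i - dvec j) * Z i j := by
    intro i j
    rw [hXZ]; exact adJ_apply Z i j
  constructor
  · ext i j
    rw [adJ_apply]
    simp only [R8, Matrix.smul_apply, Matrix.add_apply, adJ_iter, smul_eq_mul]
    rw [hXe i j]
    linear_combination (key Z hZ i j) / 27
  · ext i j
    simp only [R8, Matrix.smul_apply, Matrix.add_apply, adJ_iter, smul_eq_mul]
    rw [adJ_apply, hXe i j]
    linear_combination (key Z hZ i j) / 27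
end
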